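/- Any 2×2 positive semidefinite matrix π acting on the k-th qubit (for any fixed k ∈ {1,…,N}) that satisfies the orthogonality-preserving conditions for all distinct pairs of the 2^N N-qubit GHZ-basis states is a scalar multiple of the identity. -/
import Mathlib

open scoped BigOperators ComplexOrder

noncomputable section

def ghzN (N : ℕ) (b : Fin N → Fin 2) (s : ℂ) : (Fin N → Fin 2) → ℂ :=
  fun x => (if x = b then 1 else 0) + s * (if x = (fun i => b i + 1) then 1 else 0)

def opk (N : ℕ) (k : Fin N) (π : Matrix (Fin 2) (Fin 2) ℂ)
    (ψ : (Fin N → Fin 2) → ℂ) : (Fin N → Fin 2) → ℂ :=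
  fun x => ∑ a, π (x k) a * ψ (Function.update x k a)

lemma fin2_ne_add_one (a : Fin 2) : a ≠ a + 1 := by fin_cases a <;> decide

lemma ghz_ne_flip {N : ℕ} (k : Fin N) (b : Fin N → Fin 2) :
    b ≠ fun i => b i + 1 := fun hc => fin2_ne_add_one (b k) (congrFun hc k)

lemma sum_ghz_mul {N : ℕ} (b : Fin N → Fin 2) (s : ℂ) (g : (Fin N → Fin 2) → ℂ) :
    ∑ x, star (ghzN N b s x) * g x = g b + star s * g (fun i => b i + 1) := by
  classical
  have key : ∀ x, star (ghzN N b s x) * g x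
      = (if x = b then g x else 0) + star s * (if x = (fun i => b i + 1) then g x else 0) := by
    intro x
    by_cases h1 : x = b <;> by_cases h2 : x = (fun i => b i + 1) <;>
      simp [ghzN, h1, h2, star_add, add_mul, apply_ite (starRingEnd ℂ), ite_mul, zero_mul]
  rw [Finset.sum_congr rfl fun x _ => key x, Finset.sum_add_distrib, ← Finset.mul_sum]
  rw [Finset.sum_ite_eq' Finset.univ b g, Finset.sum_ite_eq' Finset.univ _ g]
  simp

lemma inner_eval {N : ℕ} (k : Fin N) (π : Matrix (Fin 2) (Fin 2) ℂ)
    (b : Fin N → Fin 2) (s : ℂ) (ψ : (Fin N → Fin 2) → ℂ) :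
    (∑ x, star (ghzN N b s x) * opk N k π ψ x)
    = π (b k) 0 * ψ (Function.update b k 0) + π (b k) 1 * ψ (Function.update b k 1)
      + star s * (π (b k + 1) 0 * ψ (Function.update (fun i => b i + 1) k 0)
        + π (b k + 1) 1 * ψ (Function.update (fun i => b i + 1) k 1)) := by
  rw [sum_ghz_mul]
  simp [opk, Fin.sum_univ_two]

lemma ghz_self {N : ℕ} (k : Fin N) (b : Fin N → Fin 2) (s : ℂ) : ghzN N b s b = 1 := by
  simp [ghzN, ghz_ne_flip k b]

lemma ghz_flip {N : ℕ} (k : Fin N) (b : Fin N → Fin 2) (s : ℂ) :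
    ghzN N b s (fun i => b i + 1) = s := by
  simp [ghzN, Ne.symm (ghz_ne_flip k b)]

lemma ghz_zero {N : ℕ} (b : Fin N → Fin 2) (s : ℂ) (y : Fin N → Fin 2)
    (h1 : y ≠ b) (h2 : y ≠ fun i => b i + 1) : ghzN N b s y = 0 := by
  simp [ghzN, h1, h2]

/-- Any 2×2 PSD matrix acting on the `k`-th qubit that preserves the pairwise
orthogonality of the `2^N` N-qubit GHZ-basis states is a scalar multiple of the
identity. -/
theorem ghzN_basis_locally_irreducible (N : ℕ) (hN : 2 ≤ N) (k : Fin N)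
    (π : Matrix (Fin 2) (Fin 2) ℂ) (hπ : π.PosSemidef)
    (h : ∀ (b b' : Fin N → Fin 2) (s s' : ℂ),
      b ⟨0, by omega⟩ = 0 → b' ⟨0, by omega⟩ = 0 →
      (s = 1 ∨ s = -1) → (s' = 1 ∨ s' = -1) → (b, s) ≠ (b', s') →
      (∑ x, star (ghzN N b s x) * opk N k π (ghzN N b' s') x) = 0) :
    ∃ c : ℂ, π = c • (1 : Matrix (Fin 2) (Fin 2) ℂ) := by
  classical
  obtain ⟨j, hjk⟩ : ∃ j : Fin N, j ≠ k := by
    rcases eq_or_ne k ⟨0, by omega⟩ with hk | hk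
    · exact ⟨⟨1, by omega⟩, by simp [hk, Fin.ext_iff]⟩
    · exact ⟨⟨0, by omega⟩, Ne.symm hk⟩
  have e1 : Function.update (fun _ : Fin N => (0 : Fin 2)) k 0 = fun _ => 0 :=
    Function.update_eq_self k _
  have e2 : Function.update (fun _ : Fin N => (1 : Fin 2)) k 1 = fun _ => 1 :=
    Function.update_eq_self k _
  -- Diagonal equation: π 0 0 = π 1 1
  have hdiag : π 0 0 = π 1 1 := by
    have hd := h (fun _ => 0) (fun _ => 0) 1 (-1) rfl rfl (Or.inl rfl) (Or.inr rfl)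
      (by norm_num [Prod.ext_iff])
    rw [inner_eval] at hd
    simp only [zero_add, star_one, one_mul] at hd
    rw [e1, e2] at hd
    have v1 : ghzN N (fun _ : Fin N => (0 : Fin 2)) (-1) (fun _ => 0) = 1 := ghz_self k _ _
    have v4 : ghzN N (fun _ : Fin N => (0 : Fin 2)) (-1) (fun _ => 1) = -1 := by
      simpa using ghz_flip k (fun _ : Fin N => (0 : Fin 2)) (-1)
    have v2 : ghzN N (fun _ : Fin N => (0 : Fin 2)) (-1)
        (Function.update (fun _ => (0 : Fin 2)) k 1) = 0 := by
      apply ghz_zero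
      · intro hc
        have := congrFun hc k
        rw [Function.update_self] at this
        exact absurd this (by decide)
      · intro hc
        have := congrFun hc j
        rw [Function.update_of_ne hjk] at this
        exact absurd this (by decide)
    have v3 : ghzN N (fun _ : Fin N => (0 : Fin 2)) (-1)
        (Function.update (fun _ => (1 : Fin 2)) k 0) = 0 := by
      apply ghz_zero
      · intro hc
        have := congrFun hc j
        rw [Function.update_of_ne hjk] at this
        exact absurd this (by decide)
      · intro hc
        have := congrFun hc k
        rw [Function.update_self] at this
        exact absurd this (by decide)
    rw [v1, v2, v3, v4] at hd
    linear_combination hd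
  -- Off-diagonal: π 0 1 = 0 and π 1 0 = 0
  have hoff : π 0 1 = 0 ∧ π 1 0 = 0 := by
    rcases eq_or_ne k ⟨0, by omega⟩ with hk0 | hk0
    · -- k is the first qubit
      have h0k : (⟨0, by omega⟩ : Fin N) = k := by rw [hk0]
      have key : ∀ s' : ℂ, (s' = 1 ∨ s' = -1) →
          π 0 1 * s' + π 1 0 = 0 := by
        intro s' hs'
        have hne : ((fun _ : Fin N => (0 : Fin 2)), (1:ℂ)) ≠
            ((fun i : Fin N => if i = k then (0 : Fin 2) else 1), s') := by
          intro hc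
          have hf : (fun _ : Fin N => (0 : Fin 2)) = fun i => if i = k then (0:Fin 2) else 1 :=
            congrArg Prod.fst hc
          simpa [hjk] using congrFun hf j
        have ho := h (fun _ => 0) (fun i => if i = k then 0 else 1) 1 s' rfl
          (by simp [h0k]) (Or.inl rfl) hs' hne
        rw [inner_eval] at ho
        simp only [zero_add, star_one, one_mul] at ho
        rw [e1, e2] at ho
        have u2 : Function.update (fun _ : Fin N => (0 : Fin 2)) k 1
            = fun i => (if i = k then (0 : Fin 2) else 1) + 1 := by
          funext i
          rw [Function.update_apply]
          by_cases hik : i = k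
          · subst hik; simp
          · simp [hik]
        have u3 : Function.update (fun _ : Fin N => (1 : Fin 2)) k 0
            = fun i => if i = k then (0 : Fin 2) else 1 := by
          funext i
          rw [Function.update_apply]
        rw [u2, u3] at ho
        have w1 : ghzN N (fun i : Fin N => if i = k then (0 : Fin 2) else 1) s'
            (fun _ => 0) = 0 := by
          apply ghz_zero
          · intro hc
            simpa [hjk] using congrFun hc j
          · intro hc
            simpa using congrFun hc k
        have w4 : ghzN N (fun i : Fin N => if i = k then (0 : Fin 2) else 1) s'
            (fun _ => 1) = 0 := by
          apply ghz_zero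
          · intro hc
            simpa using congrFun hc k
          · intro hc
            simpa [hjk] using congrFun hc j
        have w2 := ghz_flip k (fun i : Fin N => if i = k then (0 : Fin 2) else 1) s'
        have w3 := ghz_self k (fun i : Fin N => if i = k then (0 : Fin 2) else 1) s'
        rw [w1, w2, w3, w4] at ho
        linear_combination ho
      have k1 := key 1 (Or.inl rfl)
      have k2 := key (-1) (Or.inr rfl)
      exact ⟨by linear_combination (k1 - k2) / 2, by linear_combination (k1 + k2) / 2⟩
    · -- k is not the first qubit
      have key : ∀ s' : ℂ, (s' = 1 ∨ s' = -1) →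
          π 0 1 + π 1 0 * s' = 0 := by
        intro s' hs'
        have hne : ((fun _ : Fin N => (0 : Fin 2)), (1:ℂ)) ≠
            ((fun i : Fin N => if i = k then (1 : Fin 2) else 0), s') := by
          intro hc
          have hf : (fun _ : Fin N => (0 : Fin 2)) = fun i => if i = k then (1:Fin 2) else 0 :=
            congrArg Prod.fst hc
          simpa using congrFun hf k
        have ho := h (fun _ => 0) (fun i => if i = k then 1 else 0) 1 s' rfl
          (if_neg (Ne.symm hk0)) (Or.inl rfl) hs' hne
        rw [inner_eval] at ho
        simp only [zero_add, star_one, one_mul] at ho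
        rw [e1, e2] at ho
        have u2 : Function.update (fun _ : Fin N => (0 : Fin 2)) k 1
            = fun i => if i = k then (1 : Fin 2) else 0 := by
          funext i
          rw [Function.update_apply]
        have u3 : Function.update (fun _ : Fin N => (1 : Fin 2)) k 0
            = fun i => (if i = k then (1 : Fin 2) else 0) + 1 := by
          funext i
          rw [Function.update_apply]
          by_cases hik : i = k
          · subst hik; simp
          · simp [hik]
        rw [u2, u3] at ho
        have w1 : ghzN N (fun i : Fin N => if i = k then (1 : Fin 2) else 0) s'
            (fun _ => 0) = 0 := by
          apply ghz_zero
          · intro hc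
            simpa using congrFun hc k
          · intro hc
            simpa [hjk] using congrFun hc j
        have w4 : ghzN N (fun i : Fin N => if i = k then (1 : Fin 2) else 0) s'
            (fun _ => 1) = 0 := by
          apply ghz_zero
          · intro hc
            simpa [hjk] using congrFun hc j
          · intro hc
            simpa using congrFun hc k
        have w2 := ghz_self k (fun i : Fin N => if i = k then (1 : Fin 2) else 0) s'
        have w3 := ghz_flip k (fun i : Fin N => if i = k then (1 : Fin 2) else 0) s'
        rw [w1, w2, w3, w4] at ho
        linear_combination ho
      have k1 := key 1 (Or.inl rfl)
      have k2 := key (-1) (Or.inr rfl)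
      exact ⟨by linear_combination (k1 + k2) / 2, by linear_combination (k1 - k2) / 2⟩
  refine ⟨π 0 0, ?_⟩
  ext a b
  fin_cases a <;> fin_cases b <;>
    simp [Matrix.smul_apply, Matrix.one_apply, hoff.1, hoff.2, hdiag]
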